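/- For b = 2 and Λ = (2) (so ρ = 1, λ = 2), writing T = (t₁,t₂) and Z = (z₁,z₂), the recurrence of Theorem 4.3 specializes to Ω(2n; z₁,z₂) = Ω(n; z₁^{t₁}, z₂^{t₂}) + z₂·Ω(n-1; z₁^{t₁}, z₂^{t₂}) and Ω(2n+1; z₁,z₂) = z₁·Ω(n; z₁^{t₁}, z₂^{t₂}), combined appropriately; consequently Ω_{2,T}^{(2)}(n; z₁,z₂) = ω_{t₁,t₂}(n+1; z₁,z₂) for all n ≥ 0, where ω is the 2-parameter generalized Stern polynomial. -/

import Mathlib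

/-!
Write `g = 1 + z₁ q + z₂ q²` and let `σ` be the substitution `zᵢ ↦ zᵢ^{tᵢ}`. The `j`-th factor of
the product is `g` with `σʲ` applied to its coefficients and `q` replaced by `q^{2^j}`, so the
partial product `P_{N+1}` equals `g(q) · (σ P_N)(q²)`. Reading off the coefficients of `q^{2n+1}` and
`q^{2n}` gives the two recurrences for `Ω`, and these are the recurrences of `ω` shifted by one.
-/

open MvPolynomial

/-- Substitution `z₁ ↦ z₁^{t₁}`, `z₂ ↦ z₂^{t₂}` in `ℤ[z₁, z₂]`, where `z₁ = X 0` and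
`z₂ = X 1`. -/
noncomputable def substT (t₁ t₂ : ℕ) (p : MvPolynomial (Fin 2) ℤ) :
    MvPolynomial (Fin 2) ℤ :=
  aeval (fun i : Fin 2 => (X i : MvPolynomial (Fin 2) ℤ) ^ (if i = 0 then t₁ else t₂)) p

namespace Polynomial

variable {R : Type*} [CommSemiring R]

noncomputable def expandMapProd (φ : R →+* R) (g : R[X]) (b N : ℕ) : R[X] :=
  ∏ j ∈ Finset.range N, expand R (b ^ j) (map (φ ^ j) g)

theorem expandMapProd_succ (φ : R →+* R) (g : R[X]) (b N : ℕ) :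
    expandMapProd φ g b (N + 1) = g * expand R b (map φ (expandMapProd φ g b N)) := by
  simp only [expandMapProd, Finset.prod_range_succ', Polynomial.map_prod, map_prod, pow_zero,
    expand_one, map_id, RingHom.one_def]
  rw [mul_comm]
  congr 1
  refine Finset.prod_congr rfl fun j _ => ?_
  rw [map_expand, expand_expand, map_map, ← pow_succ', ← RingHom.mul_def, ← pow_succ']

theorem coeff_quadratic_mul_expand_two (u v : R) (h : R[X]) (m : ℕ) :
    ((1 + C u * X + C v * X ^ 2) * expand R 2 h).coeff m =
      (expand R 2 h).coeff m + u * (if 1 ≤ m then (expand R 2 h).coeff (m - 1) else 0) +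
        v * (if 2 ≤ m then (expand R 2 h).coeff (m - 2) else 0) := by
  rw [show (1 + C u * X + C v * X ^ 2) * expand R 2 h =
      expand R 2 h + C u * (expand R 2 h * X ^ 1) + C v * (expand R 2 h * X ^ 2) by ring]
  simp only [coeff_add, coeff_C_mul, coeff_mul_X_pow']

theorem coeff_quadratic_mul_expand_two_odd (u v : R) (h : R[X]) (n : ℕ) :
    ((1 + C u * X + C v * X ^ 2) * expand R 2 h).coeff (2 * n + 1) = u * h.coeff n := by
  rw [coeff_quadratic_mul_expand_two]
  rcases Nat.eq_zero_or_pos n with rfl | hn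
  · simp [coeff_expand two_pos]
  · simp [coeff_expand two_pos, show ¬ 2 ∣ 2 * n + 1 by omega, show ¬ 2 ∣ 2 * n - 1 by omega]

theorem coeff_quadratic_mul_expand_two_even (u v : R) (h : R[X]) {n : ℕ} (hn : 1 ≤ n) :
    ((1 + C u * X + C v * X ^ 2) * expand R 2 h).coeff (2 * n) =
      h.coeff n + v * h.coeff (n - 1) := by
  rw [coeff_quadratic_mul_expand_two]
  simp [coeff_expand two_pos, show 2 ≤ 2 * n by omega, show ¬ 2 ∣ 2 * n - 1 by omega,
    show (2 * n - 2) / 2 = n - 1 by omega]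

end Polynomial

theorem eq_succ_of_stern_recurrences {R : Type*} [Semiring R] (φ : R → R) (x₀ x₁ : R)
    (Om w : ℕ → R) (hOm0 : Om 0 = 1)
    (hOmeven : ∀ n, 1 ≤ n → Om (2 * n) = φ (Om n) + x₁ * φ (Om (n - 1)))
    (hOmodd : ∀ n, Om (2 * n + 1) = x₀ * φ (Om n))
    (hw1 : w 1 = 1)
    (hweven : ∀ n, 1 ≤ n → w (2 * n) = x₀ * φ (w n))
    (hwodd : ∀ n, 1 ≤ n → w (2 * n + 1) = x₁ * φ (w n) + φ (w (n + 1))) (n : ℕ) :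
    Om n = w (n + 1) := by
  induction n using Nat.strong_induction_on with
  | _ n ih =>
    obtain ⟨c, rfl | rfl⟩ := Nat.even_or_odd' n
    · rcases Nat.eq_zero_or_pos c with rfl | hc
      · rw [hOm0, hw1]
      · rw [hOmeven c hc, ih c (by omega), ih (c - 1) (by omega), Nat.sub_add_cancel hc,
          hwodd c hc, add_comm]
    · rw [hOmodd c, ih c (by omega), show 2 * c + 1 + 1 = 2 * (c + 1) by ring,
        hweven (c + 1) (by omega)]

noncomputable def substTHom (t₁ t₂ : ℕ) : MvPolynomial (Fin 2) ℤ →+* MvPolynomial (Fin 2) ℤ :=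
  (aeval fun i : Fin 2 => (X i : MvPolynomial (Fin 2) ℤ) ^ (if i = 0 then t₁ else t₂)).toRingHom

theorem coe_substTHom (t₁ t₂ : ℕ) : ⇑(substTHom t₁ t₂) = substT t₁ t₂ := rfl

theorem substTHom_pow_apply_X (t₁ t₂ : ℕ) (i : Fin 2) (j : ℕ) :
    (substTHom t₁ t₂ ^ j) (X i) = X i ^ (if i = 0 then t₁ else t₂) ^ j := by
  induction j with
  | zero => simp
  | succ j ih =>
    rw [pow_succ, RingHom.mul_def, RingHom.comp_apply,
      show substTHom t₁ t₂ (X i) = X i ^ (if i = 0 then t₁ else t₂) from aeval_X _ _,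
      map_pow, ih, ← pow_mul, ← pow_succ]

noncomputable def omegaPartialProd (t₁ t₂ N : ℕ) : Polynomial (MvPolynomial (Fin 2) ℤ) :=
  Polynomial.expandMapProd (substTHom t₁ t₂)
    (1 + Polynomial.C (X 0) * Polynomial.X + Polynomial.C (X 1) * Polynomial.X ^ 2) 2 N

theorem coe_omegaPartialProd (t₁ t₂ N : ℕ) :
    (omegaPartialProd t₁ t₂ N : PowerSeries (MvPolynomial (Fin 2) ℤ)) =
      ∏ j ∈ Finset.range N,
          (1 + PowerSeries.C (R := MvPolynomial (Fin 2) ℤ)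
                ((X 0 : MvPolynomial (Fin 2) ℤ) ^ t₁ ^ j) * PowerSeries.X ^ 2 ^ j +
              PowerSeries.C (R := MvPolynomial (Fin 2) ℤ)
                ((X 1 : MvPolynomial (Fin 2) ℤ) ^ t₂ ^ j) * PowerSeries.X ^ 2 ^ (j + 1)) := by
  rw [omegaPartialProd, Polynomial.expandMapProd, ← Polynomial.coeToPowerSeries.ringHom_apply,
    map_prod]
  refine Finset.prod_congr rfl fun j _ => ?_
  have h₀ : (substTHom t₁ t₂ ^ j) (X 0) = X 0 ^ t₁ ^ j := substTHom_pow_apply_X t₁ t₂ 0 j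
  have h₁ : (substTHom t₁ t₂ ^ j) (X 1) = X 1 ^ t₂ ^ j := substTHom_pow_apply_X t₁ t₂ 1 j
  simp [h₀, h₁, pow_succ, pow_mul]

theorem Omega_two_eq_stern_general (t₁ t₂ : ℕ)
    (Om : ℕ → MvPolynomial (Fin 2) ℤ)
    (hOm : ∀ n N : ℕ, n < 2 ^ N →
      PowerSeries.coeff (R := MvPolynomial (Fin 2) ℤ) n
        (∏ j ∈ Finset.range N,
          (1 + PowerSeries.C (R := MvPolynomial (Fin 2) ℤ)
                ((X 0 : MvPolynomial (Fin 2) ℤ) ^ t₁ ^ j) * PowerSeries.X ^ 2 ^ j +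
              PowerSeries.C (R := MvPolynomial (Fin 2) ℤ)
                ((X 1 : MvPolynomial (Fin 2) ℤ) ^ t₂ ^ j) * PowerSeries.X ^ 2 ^ (j + 1)))
        = Om n)
    (w : ℕ → MvPolynomial (Fin 2) ℤ)
    (hw1 : w 1 = 1)
    (hweven : ∀ n, 1 ≤ n → w (2 * n) = X 0 * substT t₁ t₂ (w n))
    (hwodd : ∀ n, 1 ≤ n →
      w (2 * n + 1) = X 1 * substT t₁ t₂ (w n) + substT t₁ t₂ (w (n + 1))) :
    (∀ n : ℕ, 1 ≤ n →
      Om (2 * n) = substT t₁ t₂ (Om n) + X 1 * substT t₁ t₂ (Om (n - 1))) ∧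
    (∀ n : ℕ, Om (2 * n + 1) = X 0 * substT t₁ t₂ (Om n)) ∧
    (∀ n : ℕ, Om n = w (n + 1)) := by
  have hcoeff : ∀ n N, n < 2 ^ N → (omegaPartialProd t₁ t₂ N).coeff n = Om n := fun n N h => by
    rw [← hOm n N h, ← coe_omegaPartialProd, Polynomial.coeff_coe]
  have hlt (n : ℕ) : n < 2 ^ n := Nat.lt_two_pow_self
  have hlt_succ (n : ℕ) : 2 * n + 1 < 2 ^ (n + 1) := by have := hlt n; rw [pow_succ]; omega
  have heven (n : ℕ) (hn : 1 ≤ n) :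
      Om (2 * n) = substT t₁ t₂ (Om n) + X 1 * substT t₁ t₂ (Om (n - 1)) := by
    rw [← hcoeff _ (n + 1) (by have := hlt_succ n; omega), omegaPartialProd,
      Polynomial.expandMapProd_succ, Polynomial.coeff_quadratic_mul_expand_two_even _ _ _ hn,
      Polynomial.coeff_map, Polynomial.coeff_map, ← omegaPartialProd, hcoeff n n (hlt n),
      hcoeff (n - 1) n (by have := hlt n; omega), coe_substTHom]
  have hodd (n : ℕ) : Om (2 * n + 1) = X 0 * substT t₁ t₂ (Om n) := by
    rw [← hcoeff _ (n + 1) (hlt_succ n), omegaPartialProd, Polynomial.expandMapProd_succ,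
      Polynomial.coeff_quadratic_mul_expand_two_odd, Polynomial.coeff_map, ← omegaPartialProd,
      hcoeff n n (hlt n), coe_substTHom]
  have h0 : Om 0 = 1 := by
    rw [← hcoeff 0 0 one_pos, omegaPartialProd, Polynomial.expandMapProd]
    simp
  exact ⟨heven, hodd,
    eq_succ_of_stern_recurrences (substT t₁ t₂) _ _ Om w h0 heven hodd hw1 hweven hwodd⟩

/-- For `b = 2`, `Λ = (2)`, the polynomials `Ω_{2,T}^{(2)}(n; z₁, z₂)` characterized by
`∑_{n≥0} Ω(n; Z) q^n = ∏_{j≥0} (1 + z₁^{t₁^j} q^{2^j} + z₂^{t₂^j} q^{2^{j+1}})`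
(rendered coefficientwise via stabilized partial products) satisfy the specialized
recurrences `Ω(2n; z₁, z₂) = Ω(n; z₁^{t₁}, z₂^{t₂}) + z₂ Ω(n-1; z₁^{t₁}, z₂^{t₂})`
(for `n ≥ 1`) and `Ω(2n+1; z₁, z₂) = z₁ Ω(n; z₁^{t₁}, z₂^{t₂})`; consequently
`Ω_{2,T}^{(2)}(n; z₁, z₂) = ω_{t₁,t₂}(n+1; z₁, z₂)` for all `n ≥ 0`, where `ω` is the
2-parameter generalized Stern polynomial. -/
theorem Omega_two_eq_stern (t₁ t₂ : ℕ) (ht₁ : 1 ≤ t₁) (ht₂ : 1 ≤ t₂)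
    (Om : ℕ → MvPolynomial (Fin 2) ℤ)
    (hOm : ∀ n N : ℕ, n < 2 ^ N →
      PowerSeries.coeff (R := MvPolynomial (Fin 2) ℤ) n
        (∏ j ∈ Finset.range N,
          (1 + PowerSeries.C (R := MvPolynomial (Fin 2) ℤ)
                ((X 0 : MvPolynomial (Fin 2) ℤ) ^ t₁ ^ j) * PowerSeries.X ^ 2 ^ j +
              PowerSeries.C (R := MvPolynomial (Fin 2) ℤ)
                ((X 1 : MvPolynomial (Fin 2) ℤ) ^ t₂ ^ j) * PowerSeries.X ^ 2 ^ (j + 1)))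
        = Om n)
    (w : ℕ → MvPolynomial (Fin 2) ℤ)
    (hw0 : w 0 = 0) (hw1 : w 1 = 1)
    (hweven : ∀ n, 1 ≤ n → w (2 * n) = X 0 * substT t₁ t₂ (w n))
    (hwodd : ∀ n, 1 ≤ n →
      w (2 * n + 1) = X 1 * substT t₁ t₂ (w n) + substT t₁ t₂ (w (n + 1))) :
    (∀ n : ℕ, 1 ≤ n →
      Om (2 * n) = substT t₁ t₂ (Om n) + X 1 * substT t₁ t₂ (Om (n - 1))) ∧
    (∀ n : ℕ, Om (2 * n + 1) = X 0 * substT t₁ t₂ (Om n)) ∧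
    (∀ n : ℕ, Om n = w (n + 1)) :=
  Omega_two_eq_stern_general t₁ t₂ Om hOm w hw1 hweven hwodd
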